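/- Let G be a finite simple graph with no isolated vertices, and let U be its set of unmarked vertices (vertices u such that no neighbor v has (deg(v),ID(v)) > (deg(u),ID(u)) lexicographically, for an injective ID). Redistribute a charge of 1 from each u ∈ U equally among its deg(u) neighbors. Then every marked vertex receives total charge at most 1, and consequently |U| ≤ |V \ U|. -/

import Mathlib

open scoped Classical

/-- A vertex `u` is *marked* if some neighbor `v` satisfies
`(deg v, ID v) > (deg u, ID u)` lexicographically. -/
def isMarked {V : Type*} [Fintype V] (G : SimpleGraph V) (ID : V → ℕ) (u : V) : Prop :=
  ∃ v, G.Adj u v ∧ toLex (G.degree u, ID u) < toLex (G.degree v, ID v)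

/-!
An unmarked vertex `u` is a strict lexicographic maximum of `(deg, ID)` over its closed
neighbourhood, so its neighbours are marked and have degree at most `deg u`. Hence the charge
`1 / deg u` it sends to a neighbour `v` is at most `1 / deg v`, and `v` receives at most
`deg v` such charges: every marked vertex receives at most `1`. Since every unmarked vertex
sends out exactly `1`, double counting gives `|U| ≤ |V \ U|`.
-/

open Finset

namespace SimpleGraph

variable {V : Type*} [Fintype V] {G : SimpleGraph V} [DecidableRel G.Adj]

theorem sum_one_div_degree_le_one {v : V} {s : Finset V} (hs : s ⊆ G.neighborFinset v)
    (hdeg : ∀ u ∈ s, G.degree v ≤ G.degree u) :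
    ∑ u ∈ s, (1 : ℝ) / G.degree u ≤ 1 := by
  have hcard : #s ≤ G.degree v := G.card_neighborFinset_eq_degree v ▸ card_le_card hs
  calc ∑ u ∈ s, (1 : ℝ) / G.degree u
      ≤ ∑ _u ∈ s, (1 : ℝ) / G.degree v :=
        sum_le_sum fun u hu => by
          have hv : 0 < G.degree v :=
            (G.degree_pos_iff_exists_adj v).mpr ⟨u, (G.mem_neighborFinset v u).mp (hs hu)⟩
          exact one_div_le_one_div_of_le (by exact_mod_cast hv) (by exact_mod_cast hdeg u hu)
    _ = #s / G.degree v := by rw [sum_const, nsmul_eq_mul, mul_one_div]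
    _ ≤ 1 := div_le_one_of_le₀ (by exact_mod_cast hcard) (by positivity)

theorem card_filter_le_card_sdiff_of_charge_le_one [DecidableEq V] (p : V → Prop)
    [DecidablePred p] (hpos : ∀ u, p u → 0 < G.degree u)
    (hindep : ∀ u v, p u → G.Adj u v → ¬ p v)
    (hcharge : ∀ v, ¬ p v → ∑ u ∈ (G.neighborFinset v).filter p, (1 : ℝ) / G.degree u ≤ 1) :
    #(univ.filter p) ≤ #(univ \ univ.filter p) := by
  set U := univ.filter p
  have hsent : ∀ u ∈ U, ∑ v ∈ (univ \ U).bipartiteAbove G.Adj u, (1 : ℝ) / G.degree u = 1 := by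
    intro u hu
    have hp : p u := (mem_filter.mp hu).2
    have hnbrs : (univ \ U).bipartiteAbove G.Adj u = G.neighborFinset u := by
      ext v
      simpa [bipartiteAbove, U] using hindep u v hp
    have : (G.degree u : ℝ) ≠ 0 := by exact_mod_cast (hpos u hp).ne'
    rw [hnbrs, sum_const, card_neighborFinset_eq_degree, nsmul_eq_mul, mul_one_div_cancel this]
  have hreceived : ∀ v ∈ univ \ U,
      ∑ u ∈ U.bipartiteBelow G.Adj v, (1 : ℝ) / G.degree u ≤ 1 := by
    intro v hv
    have hnbrs : U.bipartiteBelow G.Adj v = (G.neighborFinset v).filter p := by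
      ext u
      simp [bipartiteBelow, U, G.adj_comm u v, and_comm]
    exact hnbrs ▸ hcharge v (by simpa [U] using hv)
  suffices (#U : ℝ) ≤ #(univ \ U) by exact_mod_cast this
  calc (#U : ℝ) = ∑ u ∈ U, ∑ v ∈ (univ \ U).bipartiteAbove G.Adj u, (1 : ℝ) / G.degree u := by
        rw [sum_congr rfl hsent, sum_const, nsmul_one]
    _ = ∑ v ∈ univ \ U, ∑ u ∈ U.bipartiteBelow G.Adj v, (1 : ℝ) / G.degree u :=
        sum_sum_bipartiteAbove_eq_sum_sum_bipartiteBelow _ _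
    _ ≤ ∑ _v ∈ univ \ U, (1 : ℝ) := sum_le_sum hreceived
    _ = #(univ \ U) := by rw [sum_const, nsmul_one]

end SimpleGraph

section Marking

variable {V : Type*} [Fintype V] {G : SimpleGraph V} [DecidableRel G.Adj] {ID : V → ℕ}

/-- `isMarked` computes degrees with the classical instance; this restates it with the ambient one. -/
theorem isMarked_iff {u : V} :
    isMarked G ID u ↔ ∃ v, G.Adj u v ∧ toLex (G.degree u, ID u) < toLex (G.degree v, ID v) := by
  unfold isMarked
  convert Iff.rfl

theorem toLex_le_of_not_isMarked {u v : V} (hu : ¬ isMarked G ID u) (huv : G.Adj u v) :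
    toLex (G.degree v, ID v) ≤ toLex (G.degree u, ID u) :=
  not_lt.mp fun h => hu (isMarked_iff.mpr ⟨v, huv, h⟩)

theorem degree_le_of_not_isMarked {u v : V} (hu : ¬ isMarked G ID u) (huv : G.Adj u v) :
    G.degree v ≤ G.degree u :=
  (Prod.Lex.le_iff.mp (toLex_le_of_not_isMarked hu huv)).elim le_of_lt (fun h => h.1.le)

theorem isMarked_of_adj_of_not_isMarked (hID : Function.Injective ID) {u v : V}
    (hu : ¬ isMarked G ID u) (huv : G.Adj u v) : isMarked G ID v := by
  refine isMarked_iff.mpr ⟨u, huv.symm, (toLex_le_of_not_isMarked hu huv).lt_of_ne ?_⟩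
  intro h
  exact huv.ne (hID (congrArg Prod.snd (toLex.injective h))).symm

end Marking

/-- Charge redistribution: each unmarked vertex sends charge `1/deg u` to each of its
neighbors; every marked vertex receives total charge at most `1`, hence
`|U| ≤ |V \ U|` where `U` is the set of unmarked vertices. -/
theorem charge_argument {V : Type*} [Fintype V] [DecidableEq V]
    (G : SimpleGraph V) [DecidableRel G.Adj] (ID : V → ℕ)
    (hID : Function.Injective ID) (hNoIso : ∀ v : V, 0 < G.degree v) :
    (∀ v : V, isMarked G ID v →
      (∑ u ∈ (G.neighborFinset v).filter (fun u => ¬ isMarked G ID u),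
        (1 : ℝ) / G.degree u) ≤ 1) ∧
    (Finset.univ.filter (fun u : V => ¬ isMarked G ID u)).card ≤
      (Finset.univ \ Finset.univ.filter (fun u : V => ¬ isMarked G ID u)).card := by
  have hcharge : ∀ v : V,
      (∑ u ∈ (G.neighborFinset v).filter (fun u => ¬ isMarked G ID u),
        (1 : ℝ) / G.degree u) ≤ 1 := fun v =>
    G.sum_one_div_degree_le_one (filter_subset _ _) fun u hu => by
      rw [mem_filter, SimpleGraph.mem_neighborFinset] at hu
      exact degree_le_of_not_isMarked hu.2 hu.1.symm
  refine ⟨fun v _ => hcharge v, ?_⟩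
  exact G.card_filter_le_card_sdiff_of_charge_le_one _ (fun u _ => hNoIso u)
    (fun u v hu huv => not_not.mpr (isMarked_of_adj_of_not_isMarked hID hu huv))
    (fun v _ => hcharge v)
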